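/- arXiv:1002.4060 — 3 statements merged into one kernel-verified Lean document; each statement's English description precedes it below -/
import Mathlib

section
/- The n-th Motzkin number satisfies m_n = sum over i >= 0 of (1/(i+1)) * binomial(n, 2i) * binomial(2i, i). -/
/-!
Count more generally the paths of length `n` that start at height `h`. Such a path with `2u + h`
non-flat steps is a choice of the positions of those steps together with an up/down path from `h`
to `0`, and the latter are counted by the ballot number `C(2u+h, u) - C(2u+h, u+h+1)` (reflection
principle). Instead of building this bijection we check that both sides satisfy the same
first-step recursion in `(n, h)`: for paths by splitting off the first step, for the sum by
Pascal's rule. At `h = 0` the ballot number is the Catalan number `C(2u, u) / (u + 1)`.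
-/

/-- Paths with steps (1,1),(1,-1),(1,0) encoded by their height increments,
starting at height `h`, staying weakly above the x-axis and ending at height 0. -/
noncomputable def latticeCount (len : ℕ) (h : ℕ) : ℕ :=
  Nat.card {l : List ℤ // l.length = len ∧ (∀ x ∈ l, x = 1 ∨ x = -1 ∨ x = 0) ∧
    (∀ m, 0 ≤ (h : ℤ) + (l.take m).sum) ∧ (h : ℤ) + l.sum = 0}

/-- The `n`-th Motzkin number, as the number of Motzkin paths of length `n`. -/
noncomputable def motzkin (n : ℕ) : ℕ := latticeCount n 0

open Finset

def motzkinPaths (len : ℕ) (h : ℤ) : Set (List ℤ) :=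
  {l | l.length = len ∧ (∀ x ∈ l, x = 1 ∨ x = -1 ∨ x = 0) ∧
    (∀ m, 0 ≤ h + (l.take m).sum) ∧ h + l.sum = 0}

theorem latticeCount_eq_ncard (len h : ℕ) :
    latticeCount len h = (motzkinPaths len h).ncard := by
  rw [latticeCount, ← Nat.card_coe_set_eq]
  rfl

theorem motzkinPaths_eq_empty_of_neg {h : ℤ} (hh : h < 0) (len : ℕ) :
    motzkinPaths len h = ∅ :=
  Set.eq_empty_of_forall_notMem fun _ hl => by simpa [hh.not_ge] using hl.2.2.1 0

theorem motzkinPaths_zero (h : ℤ) : motzkinPaths 0 h = if h = 0 then {[]} else ∅ := by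
  ext (_ | ⟨_, _⟩) <;> by_cases h0 : h = 0 <;> simp [motzkinPaths, h0]

theorem cons_mem_motzkinPaths_iff {h : ℤ} (hh : 0 ≤ h) {n : ℕ} {a : ℤ} {t : List ℤ} :
    a :: t ∈ motzkinPaths (n + 1) h ↔
      (a = 1 ∨ a = -1 ∨ a = 0) ∧ t ∈ motzkinPaths n (h + a) := by
  simp only [motzkinPaths, Set.mem_ofPred_eq]
  rw [← Nat.and_forall_add_one]
  simp only [List.length_cons, List.forall_mem_cons, List.take_zero, List.take_succ_cons,
    List.sum_nil, List.sum_cons, add_zero, hh, true_and, ← add_assoc, add_left_inj]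
  tauto

theorem motzkinPaths_succ {h : ℤ} (hh : 0 ≤ h) (n : ℕ) :
    motzkinPaths (n + 1) h = List.cons 1 '' motzkinPaths n (h + 1) ∪
      List.cons 0 '' motzkinPaths n h ∪ List.cons (-1) '' motzkinPaths n (h - 1) := by
  ext l
  cases l with
  | nil => simp [motzkinPaths]
  | cons a t =>
    rw [cons_mem_motzkinPaths_iff hh]
    simp only [Set.mem_union, Set.mem_image, List.cons.injEq, exists_eq_right_right]
    constructor
    · rintro ⟨rfl | rfl | rfl, ht⟩ <;> simp_all [sub_eq_add_neg]
    · rintro ((⟨ht, rfl⟩ | ⟨ht, rfl⟩) | ⟨ht, rfl⟩) <;> simp_all [sub_eq_add_neg]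

theorem motzkinPaths_finite (n : ℕ) (h : ℤ) : (motzkinPaths n h).Finite := by
  induction n generalizing h with
  | zero => rw [motzkinPaths_zero]; split_ifs <;> simp
  | succ n ih =>
    rcases lt_or_ge h 0 with hneg | hh
    · simp [motzkinPaths_eq_empty_of_neg hneg]
    · rw [motzkinPaths_succ hh]
      exact (((ih _).image _).union ((ih _).image _)).union ((ih _).image _)

theorem disjoint_image_cons {α : Type*} {a b : α} (hab : a ≠ b) (s t : Set (List α)) :
    Disjoint (List.cons a '' s) (List.cons b '' t) := by
  rw [Set.disjoint_left]
  rintro _ ⟨_, -, rfl⟩ ⟨_, -, h⟩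
  exact hab (List.cons.inj h).1.symm

theorem ncard_motzkinPaths_succ {h : ℤ} (hh : 0 ≤ h) (n : ℕ) :
    (motzkinPaths (n + 1) h).ncard = (motzkinPaths n (h + 1)).ncard +
      (motzkinPaths n h).ncard + (motzkinPaths n (h - 1)).ncard := by
  have hfin (k : ℤ) (a : ℤ) := (motzkinPaths_finite n k).image (List.cons a)
  rw [motzkinPaths_succ hh,
    Set.ncard_union_eq (Set.disjoint_union_left.mpr
      ⟨disjoint_image_cons (by norm_num) _ _, disjoint_image_cons (by norm_num) _ _⟩)
      ((hfin _ _).union (hfin _ _)) (hfin _ _),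
    Set.ncard_union_eq (disjoint_image_cons (by norm_num) _ _) (hfin _ _) (hfin _ _)]
  simp only [Set.ncard_image_of_injective _ List.cons_injective]

-- The subtracted term is `C(2u+h, u-1)` by symmetry, written so that nothing truncates at `u = 0`.
def ballot (u h : ℕ) : ℤ := (2 * u + h).choose u - (2 * u + h).choose (u + h + 1)

theorem ballot_zero_left (h : ℕ) : ballot 0 h = 1 := by
  simp [ballot]

theorem ballot_succ_zero (u : ℕ) : ballot (u + 1) 0 = ballot u 1 := by
  have h₁ : 2 * (u + 1) + 0 = 2 * u + 1 + 1 := by ring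
  simp only [ballot, h₁, Nat.choose_succ_succ', add_zero]
  push_cast
  ring_nf

theorem ballot_succ_succ (u h : ℕ) :
    ballot (u + 1) (h + 1) = ballot u (h + 2) + ballot (u + 1) h := by
  have h₁ : 2 * (u + 1) + (h + 1) = 2 * u + (h + 2) + 1 := by ring
  have h₂ : 2 * (u + 1) + h = 2 * u + (h + 2) := by ring
  simp only [ballot, h₁, h₂, Nat.choose_succ_succ']
  push_cast
  ring_nf

theorem ballot_zero_right_mul (u : ℕ) : ballot u 0 * (u + 1) = (2 * u).choose u := by
  have h : ((2 * u).choose (u + 1) : ℤ) * (u + 1) = (2 * u).choose u * u := by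
    have := Nat.choose_succ_right_eq (2 * u) u
    rw [show 2 * u - u = u by omega] at this
    exact_mod_cast this
  simp only [ballot, add_zero]
  linear_combination -h

def ballotSum (n h : ℕ) : ℤ := ∑ u ∈ range (n + 1), n.choose (2 * u + h) * ballot u h

theorem ballotSum_eq_sum_range {n N : ℕ} (hN : n + 1 ≤ N) (h : ℕ) :
    ballotSum n h = ∑ u ∈ range N, n.choose (2 * u + h) * ballot u h := by
  refine sum_subset (range_subset_range.mpr hN) fun u _ hu => ?_
  rw [Nat.choose_eq_zero_of_lt (by simp at hu; omega), Nat.cast_zero, zero_mul]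

theorem ballotSum_zero (h : ℕ) : ballotSum 0 h = if h = 0 then 1 else 0 := by
  cases h <;> simp [ballotSum, ballot_zero_left]

theorem ballotSum_succ_zero (n : ℕ) : ballotSum (n + 1) 0 = ballotSum n 1 + ballotSum n 0 := by
  rw [ballotSum, ballotSum_eq_sum_range (N := n + 2) (by omega) 0, sum_range_succ',
    sum_range_succ' _ (n + 1), ballotSum]
  simp only [mul_add, Nat.choose_succ_succ', ballot_succ_zero, Nat.cast_add, add_mul,
    sum_add_distrib, mul_zero, add_zero, Nat.choose_zero_right]
  ring

theorem ballotSum_succ_succ (n h : ℕ) :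
    ballotSum (n + 1) (h + 1) = ballotSum n (h + 2) + ballotSum n (h + 1) + ballotSum n h := by
  have shift : ∑ u ∈ range (n + 2), (n.choose (2 * u + h) : ℤ) * ballot u (h + 1) =
      ballotSum n (h + 2) + ∑ u ∈ range (n + 2), (n.choose (2 * u + h) : ℤ) * ballot u h := by
    rw [sum_range_succ', sum_range_succ' _ (n + 1), ballotSum]
    simp_rw [show ∀ u, 2 * (u + 1) + h = 2 * u + (h + 2) by intro u; ring, ballot_succ_succ,
      ballot_zero_left, mul_add, sum_add_distrib]
    ring
  rw [ballotSum, ballotSum_eq_sum_range (N := n + 2) (by omega) (h + 1),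
    ballotSum_eq_sum_range (N := n + 2) (by omega) h]
  simp_rw [← add_assoc _ h 1, Nat.choose_succ_succ', Nat.cast_add, add_mul, sum_add_distrib,
    shift]
  ring

theorem latticeCount_zero (h : ℕ) : latticeCount 0 h = if h = 0 then 1 else 0 := by
  rw [latticeCount_eq_ncard, motzkinPaths_zero]
  split_ifs <;> simp_all

theorem latticeCount_succ_zero (n : ℕ) :
    latticeCount (n + 1) 0 = latticeCount n 1 + latticeCount n 0 := by
  simp [latticeCount_eq_ncard, ncard_motzkinPaths_succ le_rfl,
    motzkinPaths_eq_empty_of_neg (show (-1 : ℤ) < 0 by norm_num)]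

theorem latticeCount_succ_succ (n h : ℕ) :
    latticeCount (n + 1) (h + 1) =
      latticeCount n (h + 2) + latticeCount n (h + 1) + latticeCount n h := by
  simp only [latticeCount_eq_ncard, Nat.cast_add, Nat.cast_one, Nat.cast_ofNat]
  rw [ncard_motzkinPaths_succ (by positivity), add_sub_cancel_right, add_assoc (h : ℤ) 1 1,
    one_add_one_eq_two]

theorem latticeCount_eq_ballotSum (n h : ℕ) : (latticeCount n h : ℤ) = ballotSum n h := by
  induction n generalizing h with
  | zero => rw [latticeCount_zero, ballotSum_zero]; split_ifs <;> rfl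
  | succ n ih =>
    cases h with
    | zero => rw [latticeCount_succ_zero, ballotSum_succ_zero]; push_cast; rw [ih, ih]
    | succ h => rw [latticeCount_succ_succ, ballotSum_succ_succ]; push_cast; rw [ih, ih, ih]

/-- Regev's formula for the Motzkin numbers. -/
theorem motzkin_sum_formula (n : ℕ) :
    (motzkin n : ℚ) =
      ∑ i ∈ Finset.range (n + 1), (1 / (i + 1 : ℚ)) * n.choose (2 * i) * (2 * i).choose i := by
  rw [motzkin, ← Int.cast_natCast, latticeCount_eq_ballotSum, ballotSum, Int.cast_sum]
  refine Finset.sum_congr rfl fun i _ => ?_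
  have hcentral : ((2 * i).choose i : ℚ) = ballot i 0 * (i + 1) := by
    exact_mod_cast (ballot_zero_right_mul i).symm
  push_cast
  rw [hcentral, add_zero]
  field_simp
end

section
/- For 0 <= j <= i <= n, let X(i,j;n) be the set of lattice paths from (i,j) to (n,0) using steps (1,1), (1,-1), (1,0) that never go below the x-axis. Then |X(i,2;n)| = m_{n-i+2} - 2*m_{n-i+1}. -/
namespace XHelp

def Cond (len h : ℕ) (l : List ℤ) : Prop :=
  l.length = len ∧ (∀ x ∈ l, x = 1 ∨ x = -1 ∨ x = 0) ∧
    (∀ m, 0 ≤ (h : ℤ) + (l.take m).sum) ∧ (h : ℤ) + l.sum = 0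

lemma latticeCount_eq (len h : ℕ) :
    latticeCount len h = Nat.card {l : List ℤ // Cond len h l} := rfl

noncomputable def enc : ℤ → Fin 3 := fun x => if x = 1 then 0 else if x = -1 then 1 else 2
noncomputable def dec : Fin 3 → ℤ := fun i => if i = 0 then 1 else if i = 1 then -1 else 0

lemma dec_enc {x : ℤ} (hx : x = 1 ∨ x = -1 ∨ x = 0) : dec (enc x) = x := by
  rcases hx with h | h | h <;> subst h <;> simp [enc, dec]

lemma key_map {len h : ℕ} (r : {l : List ℤ // Cond len h l}) :
    r.1 = (r.1.map enc).map dec := by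
  rw [List.map_map]
  calc r.1 = r.1.map id := (List.map_id _).symm
    _ = r.1.map (dec ∘ enc) :=
      List.map_congr_left fun x hx => (dec_enc (r.2.2.1 x hx)).symm

instance instFin (len h : ℕ) : Finite {l : List ℤ // Cond len h l} := by
  have hfin : {l : List ℤ | Cond len h l}.Finite := by
    apply Set.Finite.subset ((List.finite_length_eq (Fin 3) len).image (List.map dec))
    intro l hl
    exact ⟨l.map enc, by simp [hl.1], (key_map ⟨l, hl⟩).symm⟩
  exact hfin.to_subtype

lemma cond_cons {len h g : ℕ} {x : ℤ} {t : List ℤ} (hg : (g : ℤ) = (h : ℤ) + x) :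
    Cond (len + 1) h (x :: t) ↔ (x = 1 ∨ x = -1 ∨ x = 0) ∧ Cond len g t := by
  constructor
  · rintro ⟨hlen, hmem, htake, hsum⟩
    refine ⟨hmem x (by simp), by simpa using hlen, fun y hy => hmem y (by simp [hy]),
      fun m => ?_, ?_⟩
    · have := htake (m + 1)
      rw [List.take_succ_cons, List.sum_cons] at this
      rw [hg]; linarith
    · rw [List.sum_cons] at hsum
      rw [hg]; linarith
  · rintro ⟨hx, hlen, hmem, htake, hsum⟩
    refine ⟨by simpa using hlen, ?_, fun m => ?_, ?_⟩
    · intro y hy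
      rcases List.mem_cons.mp hy with h | h
      · exact h ▸ hx
      · exact hmem y h
    · cases m with
      | zero => simpa using Int.natCast_nonneg h
      | succ k =>
        have := htake k
        rw [List.take_succ_cons, List.sum_cons]
        rw [hg] at this; linarith
    · rw [List.sum_cons]
      rw [hg] at hsum; linarith

def consP {len h g : ℕ} (x : ℤ) (hx : x = 1 ∨ x = -1 ∨ x = 0)
    (hg : (g : ℤ) = (h : ℤ) + x) (p : {l : List ℤ // Cond len g l}) :
    {l : List ℤ // Cond (len + 1) h l} :=
  ⟨x :: p.1, (cond_cons hg).mpr ⟨hx, p.2⟩⟩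

lemma recS (L h : ℕ) :
    latticeCount (L + 1) (h + 1) =
      latticeCount L (h + 2) + latticeCount L (h + 1) + latticeCount L h := by
  rw [latticeCount_eq, latticeCount_eq, latticeCount_eq, latticeCount_eq]
  have hg1 : ((h + 2 : ℕ) : ℤ) = ((h + 1 : ℕ) : ℤ) + 1 := by push_cast; ring_nf
  have hg0 : ((h + 1 : ℕ) : ℤ) = ((h + 1 : ℕ) : ℤ) + 0 := by ring
  have hgm : ((h : ℕ) : ℤ) = ((h + 1 : ℕ) : ℤ) + (-1) := by push_cast; ring_nf
  have hbij : Function.Bijective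
      (Sum.elim (consP 1 (Or.inl rfl) hg1)
        (Sum.elim (consP 0 (Or.inr (Or.inr rfl)) hg0)
          (consP (-1) (Or.inr (Or.inl rfl)) hgm)) :
        {l : List ℤ // Cond L (h + 2) l} ⊕ {l : List ℤ // Cond L (h + 1) l} ⊕
          {l : List ℤ // Cond L h l} → {l : List ℤ // Cond (L + 1) (h + 1) l}) := by
    constructor
    · rintro (a | a | a) (b | b | b) hab <;>
        simp only [Sum.elim_inl, Sum.elim_inr, consP, Subtype.mk.injEq,
          List.cons.injEq] at hab <;>
        first
        | (exact congrArg _ (Subtype.ext hab.2))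
        | (exact congrArg _ (congrArg _ (Subtype.ext hab.2)))
        | omega
    · rintro ⟨l, hc⟩
      match l, hc with
      | [], hc => simp [Cond] at hc
      | x :: t, hc =>
        rcases hc.2.1 x (by simp) with hx | hx | hx
        · subst hx
          exact ⟨Sum.inl ⟨t, ((cond_cons hg1).mp hc).2⟩, rfl⟩
        · subst hx
          exact ⟨Sum.inr (Sum.inr ⟨t, ((cond_cons hgm).mp hc).2⟩), rfl⟩
        · subst hx
          exact ⟨Sum.inr (Sum.inl ⟨t, ((cond_cons hg0).mp hc).2⟩), rfl⟩
  rw [← Nat.card_eq_of_bijective _ hbij, Nat.card_sum, Nat.card_sum]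
  ring

lemma rec0 (L : ℕ) :
    latticeCount (L + 1) 0 = latticeCount L 1 + latticeCount L 0 := by
  rw [latticeCount_eq, latticeCount_eq, latticeCount_eq]
  have hg1 : ((1 : ℕ) : ℤ) = ((0 : ℕ) : ℤ) + 1 := by norm_num
  have hg0 : ((0 : ℕ) : ℤ) = ((0 : ℕ) : ℤ) + 0 := by ring
  have hbij : Function.Bijective
      (Sum.elim (consP 1 (Or.inl rfl) hg1) (consP 0 (Or.inr (Or.inr rfl)) hg0) :
        {l : List ℤ // Cond L 1 l} ⊕ {l : List ℤ // Cond L 0 l} →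
          {l : List ℤ // Cond (L + 1) 0 l}) := by
    constructor
    · rintro (a | a) (b | b) hab <;>
        simp only [Sum.elim_inl, Sum.elim_inr, consP, Subtype.mk.injEq,
          List.cons.injEq] at hab <;>
        first
        | (exact congrArg _ (Subtype.ext hab.2))
        | (exact congrArg _ (congrArg _ (Subtype.ext hab.2)))
        | omega
    · rintro ⟨l, hc⟩
      match l, hc with
      | [], hc => simp [Cond] at hc
      | x :: t, hc =>
        rcases hc.2.1 x (by simp) with hx | hx | hx
        · subst hx
          exact ⟨Sum.inl ⟨t, ((cond_cons hg1).mp hc).2⟩, rfl⟩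
        · subst hx
          exfalso
          have := hc.2.2.1 1
          simp at this
        · subst hx
          exact ⟨Sum.inr ⟨t, ((cond_cons hg0).mp hc).2⟩, rfl⟩
  rw [← Nat.card_eq_of_bijective _ hbij, Nat.card_sum]

end XHelp

/-- Paths from `(i,2)` to `(n,0)` staying weakly above the x-axis are counted by
`m_{n-i+2} - 2 m_{n-i+1}`. -/
theorem X_i_two (i n : ℕ) (h1 : 2 ≤ i) (h2 : i ≤ n) :
    (latticeCount (n - i) 2 : ℤ) = motzkin (n - i + 2) - 2 * motzkin (n - i + 1) := by
  set L := n - i with hL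
  have e1 : motzkin (L + 1) = latticeCount L 1 + motzkin L := XHelp.rec0 L
  have e2 : motzkin (L + 2) = latticeCount (L + 1) 1 + motzkin (L + 1) := XHelp.rec0 (L + 1)
  have e3 : latticeCount (L + 1) 1 = latticeCount L 2 + latticeCount L 1 + latticeCount L 0 :=
    XHelp.recS L 0
  have e4 : motzkin L = latticeCount L 0 := rfl
  omega
end

section
/- The number of lattice paths from (0,0) to (n,0) using steps (1,1), (1,-1), (1,0), never going below the x-axis, and with all (1,0) steps lying on the x-axis, equals binomial(n, floor(n/2)). -/
/-!
Generalize to paths starting at any height `h`: Motzkin paths from height `h` down to `0`, staying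
weakly above the axis, with all level steps at height `0`. Splitting off the first step, their
number `g n h` satisfies `g (n+1) h = g n (h+1) + g n (h-1) + [h = 0] g n 0` for `h ≥ 0`, with
`g n (-1) = 0`. The closed form `g n h = C(n, ⌈(n+h)/2⌉)` satisfies this by Pascal's rule, using
at `h = 0` also the symmetry `C(n, ⌊n/2⌋) = C(n, ⌈n/2⌉)`.
-/

namespace GroundedMotzkin

def IsGroundedFrom (h : ℤ) (l : List ℤ) : Prop :=
  (∀ x ∈ l, x = 1 ∨ x = -1 ∨ x = 0) ∧ (∀ m, 0 ≤ h + (l.take m).sum) ∧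
    h + l.sum = 0 ∧ ∀ (m : ℕ) (hm : m < l.length), l.get ⟨m, hm⟩ = 0 → h + (l.take m).sum = 0

@[simp]
theorem isGroundedFrom_nil {h : ℤ} : IsGroundedFrom h [] ↔ h = 0 := by
  simp +contextual [IsGroundedFrom]

theorem isGroundedFrom_cons {h x : ℤ} {t : List ℤ} :
    IsGroundedFrom h (x :: t) ↔
      0 ≤ h ∧ (x = 1 ∨ x = -1 ∨ x = 0 ∧ h = 0) ∧ IsGroundedFrom (h + x) t := by
  unfold IsGroundedFrom
  rw [← Nat.and_forall_add_one]
  simp only [List.length_cons, Nat.forall_lt_succ_left', List.forall_mem_cons, List.take_zero,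
    List.take_succ_cons, List.sum_cons, List.sum_nil, List.get_eq_getElem,
    List.getElem_cons_zero, List.getElem_cons_succ, add_zero, ← add_assoc]
  constructor
  · rintro ⟨⟨hx, ht⟩, ⟨h0, hpre⟩, hsum, hlev, hlevs⟩
    refine ⟨h0, ?_, ht, hpre, hsum, hlevs⟩
    rcases hx with hx | hx | hx <;> simp_all
  · rintro ⟨h0, hx, ht, hpre, hsum, hlevs⟩
    refine ⟨⟨?_, ht⟩, ⟨h0, hpre⟩, hsum, ?_, hlevs⟩
    · tauto
    · rintro rfl; omega

def groundedPaths : ℕ → ℤ → Finset (List ℤ)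
  | 0, h => if h = 0 then {[]} else ∅
  | n + 1, h =>
    if 0 ≤ h then
      ((groundedPaths n (h + 1)).image (List.cons 1) ∪
        (groundedPaths n (h - 1)).image (List.cons (-1))) ∪
        if h = 0 then (groundedPaths n 0).image (List.cons 0) else ∅
    else ∅

theorem mem_groundedPaths {n : ℕ} {h : ℤ} {l : List ℤ} :
    l ∈ groundedPaths n h ↔ l.length = n ∧ IsGroundedFrom h l := by
  induction n generalizing h l with
  | zero => cases l <;> simp only [groundedPaths] <;> split_ifs <;> simp [*]
  | succ n ih =>
    cases l with
    | nil => simp only [groundedPaths]; split_ifs <;> simp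
    | cons x t =>
      simp only [groundedPaths, isGroundedFrom_cons, List.length_cons]
      split_ifs <;> simp [ih] <;> grind

theorem groundedPaths_of_neg {n : ℕ} {h : ℤ} (hh : h < 0) : groundedPaths n h = ∅ := by
  cases n <;> simp [groundedPaths, hh.ne, not_le.2 hh]

theorem disjoint_image_cons {α : Type*} [DecidableEq α] {a b : α} (hab : a ≠ b)
    (s t : Finset (List α)) :
    Disjoint (s.image (List.cons a)) (t.image (List.cons b)) := by
  simp [Finset.disjoint_left, hab.symm]

theorem card_groundedPaths_succ {n : ℕ} {h : ℤ} (hh : 0 ≤ h) :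
    (groundedPaths (n + 1) h).card = (groundedPaths n (h + 1)).card +
      (groundedPaths n (h - 1)).card + if h = 0 then (groundedPaths n 0).card else 0 := by
  rw [groundedPaths, if_pos hh, Finset.card_union_of_disjoint, Finset.card_union_of_disjoint,
    Finset.card_image_of_injective _ List.cons_injective,
    Finset.card_image_of_injective _ List.cons_injective]
  · split_ifs
    · rw [Finset.card_image_of_injective _ List.cons_injective]
    · rfl
  · exact disjoint_image_cons (by norm_num) _ _
  · split_ifs
    · exact Finset.disjoint_union_left.2
        ⟨disjoint_image_cons (by norm_num) _ _, disjoint_image_cons (by norm_num) _ _⟩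
    · exact Finset.disjoint_empty_right _

theorem card_groundedPaths (n h : ℕ) : (groundedPaths n h).card = n.choose ((n + h + 1) / 2) := by
  induction n generalizing h with
  | zero =>
    rcases h with _ | k
    · simp [groundedPaths]
    · rw [groundedPaths, if_neg (by omega), Nat.choose_eq_zero_of_lt (by omega)]
      rfl
  | succ n ih =>
    rcases h with _ | k
    · have pascal := Nat.choose_succ_succ' n (n / 2)
      rw [Nat.choose_symm_of_eq_add (by omega : n = n / 2 + (n + 1) / 2)] at pascal
      have up : (groundedPaths n 1).card = n.choose (n / 2 + 1) := by
        rw [show (1 : ℤ) = (1 : ℕ) from rfl, ih]; congr 1; omega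
      have level : (groundedPaths n 0).card = n.choose ((n + 1) / 2) := by simpa using ih 0
      rw [Nat.cast_zero, card_groundedPaths_succ le_rfl, if_pos rfl,
        groundedPaths_of_neg (h := 0 - 1) (by norm_num), Finset.card_empty, add_zero, zero_add,
        up, level, add_comm, show (n + 1 + 0 + 1) / 2 = n / 2 + 1 by omega, pascal]
    · rw [card_groundedPaths_succ (by positivity), if_neg (by positivity),
        show ((k + 1 : ℕ) : ℤ) + 1 = (k + 2 : ℕ) by push_cast; ring,
        show ((k + 1 : ℕ) : ℤ) - 1 = k by push_cast; ring, ih, ih, add_zero, add_comm,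
        show (n + (k + 2) + 1) / 2 = (n + k + 1) / 2 + 1 by omega,
        show (n + 1 + (k + 1) + 1) / 2 = (n + k + 1) / 2 + 1 by omega, Nat.choose_succ_succ']

end GroundedMotzkin

/-- Motzkin paths of length `n` whose level steps all lie on the x-axis are counted by
the central binomial coefficient. -/
theorem grounded_motzkin_count (n : ℕ) :
    Nat.card {l : List ℤ // l.length = n ∧ (∀ x ∈ l, x = 1 ∨ x = -1 ∨ x = 0) ∧
      (∀ m, 0 ≤ (l.take m).sum) ∧ l.sum = 0 ∧
      (∀ (m : ℕ) (hm : m < l.length), l.get ⟨m, hm⟩ = 0 → (l.take m).sum = 0)} =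
    n.choose (n / 2) := by
  rw [Nat.subtype_card (GroundedMotzkin.groundedPaths n 0) fun l => by
    simp [GroundedMotzkin.mem_groundedPaths, GroundedMotzkin.IsGroundedFrom]]
  rw [← Nat.cast_zero, GroundedMotzkin.card_groundedPaths, add_zero,
    Nat.choose_symm_of_eq_add (by omega : n = (n + 1) / 2 + n / 2)]
end
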